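/- arXiv:1107.5598 — 3 statements merged into one kernel-verified Lean document; each statement's English description precedes it below -/
import Mathlib

section
/- Let F be a field of characteristic zero and let w, x, y, z ∈ F with x ≠ 0. Set y' = y/(2x), z' = z/x − (3/4)(y/x)², and w' = w + (1/2)(y/x)³ − (3/2)(y/x)(z/x). Then w'² + (z' − y'²)²·(z' + 2y'²) = (z³ + w·y³ + w²·x³ − 3w·x·y·z)/x³. -/
/-!
Dividing by `x³` passes to the affine chart `x = 1`, where the cubic is
`w² + w(a³ − 3ab) + b³` with `a = y/x`, `b = z/x`. Completing the square in `w` leaves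
`b³ − (a³ − 3ab)²/4`, and after the shift `b = z' + (3/4)a²`, `a = 2y'` this cubic in `z'`
has the double root `y'²` and the simple root `−2y'²`.
-/

def cyclicCubic {R : Type*} [CommRing R] (w x y z : R) : R :=
  z ^ 3 + w * y ^ 3 + w ^ 2 * x ^ 3 - 3 * w * x * y * z

def degeneratePinchPoint {R : Type*} [CommRing R] (w y z : R) : R :=
  w ^ 2 + (z - y ^ 2) ^ 2 * (z + 2 * y ^ 2)

theorem cyclicCubic_div_pow_three {F : Type*} [Field F] (w x y z : F) (hx : x ≠ 0) :
    cyclicCubic w x y z / x ^ 3 = cyclicCubic w 1 (y / x) (z / x) := by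
  unfold cyclicCubic
  field_simp

theorem degeneratePinchPoint_eq_cyclicCubic_one {F : Type*} [Field F] [CharZero F]
    (w a b : F) :
    degeneratePinchPoint (w + (1 / 2) * a ^ 3 - (3 / 2) * a * b) (a / 2)
        (b - (3 / 4) * a ^ 2) =
      cyclicCubic w 1 a b := by
  unfold degeneratePinchPoint cyclicCubic
  ring

/-- The coordinate change of Section 2.2 of the paper: for `x ≠ 0` in a field of
characteristic zero, setting `y' = y/(2x)`, `z' = z/x − (3/4)(y/x)²`,
`w' = w + (1/2)(y/x)³ − (3/2)(y/x)(z/x)`, one has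
`w'² + (z' − y'²)²(z' + 2y'²) = (z³ + wy³ + w²x³ − 3wxyz)/x³`. -/
theorem cp3_coordinate_change {F : Type*} [Field F] [CharZero F]
    (w x y z : F) (hx : x ≠ 0) :
    (w + (1 / 2) * (y / x) ^ 3 - (3 / 2) * (y / x) * (z / x)) ^ 2 +
      (z / x - (3 / 4) * (y / x) ^ 2 - (y / (2 * x)) ^ 2) ^ 2 *
        (z / x - (3 / 4) * (y / x) ^ 2 + 2 * (y / (2 * x)) ^ 2) =
      (z ^ 3 + w * y ^ 3 + w ^ 2 * x ^ 3 - 3 * w * x * y * z) / x ^ 3 := by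
  have hy : y / (2 * x) = y / x / 2 := by rw [mul_comm, div_div]
  rw [hy]
  exact (degeneratePinchPoint_eq_cyclicCubic_one w (y / x) (z / x)).trans
    (cyclicCubic_div_pow_three w x y z hx).symm
end

section
/- Let k be a field, let R = k⟦w,x,y⟧ be the ring of formal power series in three variables w, x, y over k, let m = (w,x,y) be its maximal ideal and let I = (x,y) ⊆ R. For a nonzero G ∈ R, let ord G denote the largest integer n with G ∈ mⁿ and let ord_I G denote the largest integer n with G ∈ Iⁿ. Suppose G ∈ R is nonzero with ord G = ord_I G, and let θ ∈ R be a nonunit that divides G in R. Then θ ∈ I, i.e. θ lies in the ideal generated by x and y. -/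
/-!
The `(x, y)`-adic order on `k⟦w, x, y⟧` is the weighted order for the weight that is `0` on `w`
and `1` on `x` and `y`; since `k` is a domain it is additive on products. If `θ ∉ I`, its
`I`-adic order is `0`, so the cofactor `ψ` with `G = θ ψ` has `I`-adic order at least `d`,
i.e. `ψ ∈ Iᵈ ⊆ mᵈ`. As the nonunit `θ` lies in `m`, this gives `G ∈ mᵈ⁺¹`, a
contradiction.

That powers of an ideal generated by finitely many variables are exactly the sets
`{f | n ≤ weightedOrder f}` is shown by splitting off one variable at a time:
`f = X a * g + h`, where `h` collects the monomials of `f` not divisible by `X a`.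
-/

open MvPowerSeries

namespace MvPowerSeries

open Finsupp

variable {σ R : Type*} [CommSemiring R]

def weightedOrderIdeal (w : σ → ℕ) (n : ℕ) : Ideal (MvPowerSeries σ R) where
  carrier := {f | n ≤ f.weightedOrder w}
  add_mem' hf hg := (le_min hf hg).trans (min_weightedOrder_le_add w)
  zero_mem' := by simp
  smul_mem' c f hf := hf.trans (le_add_self.trans (le_weightedOrder_mul w))

variable {w : σ → ℕ} {n : ℕ} {f : MvPowerSeries σ R}

theorem mem_weightedOrderIdeal :
    f ∈ weightedOrderIdeal w n ↔ (n : ℕ∞) ≤ f.weightedOrder w :=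
  Iff.rfl

theorem weightedOrderIdeal_zero : weightedOrderIdeal (R := R) w 0 = ⊤ :=
  eq_top_iff.2 fun f _ => by simp [mem_weightedOrderIdeal]

theorem weightedOrderIdeal_mul_le (p q : ℕ) :
    weightedOrderIdeal w p * weightedOrderIdeal w q ≤ weightedOrderIdeal (R := R) w (p + q) :=
  Ideal.mul_le.2 fun _ hf _ hg => by
    rw [mem_weightedOrderIdeal, Nat.cast_add]
    exact (add_le_add hf hg).trans (le_weightedOrder_mul w)

theorem pow_le_weightedOrderIdeal {J : Ideal (MvPowerSeries σ R)}
    (hJ : J ≤ weightedOrderIdeal w 1) : ∀ n : ℕ, J ^ n ≤ weightedOrderIdeal w n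
  | 0 => by simp [weightedOrderIdeal_zero]
  | n + 1 => by
    rw [pow_succ]
    exact (Ideal.mul_mono (pow_le_weightedOrderIdeal hJ n) hJ).trans
      (weightedOrderIdeal_mul_le n 1)

theorem span_X_image_le_weightedOrderIdeal_one {s : Set σ} (hs : ∀ i ∈ s, 1 ≤ w i) :
    Ideal.span (X '' s) ≤ weightedOrderIdeal (R := R) w 1 := by
  classical
  refine Ideal.span_le.2 ?_
  rintro _ ⟨i, hi, rfl⟩
  refine nat_le_weightedOrder w fun d hd => ?_
  rw [coeff_X, if_neg]
  rintro rfl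
  rw [weight_single, one_smul] at hd
  exact absurd (hs i hi) (by omega)

theorem exists_eq_X_mul_add (a : σ) (f : MvPowerSeries σ R) :
    ∃ g h : MvPowerSeries σ R, f = X a * g + h ∧
      (∀ e, coeff e g = coeff (e + single a 1) f) ∧
      ∀ e, coeff e h = if e a = 0 then coeff e f else 0 := by
  classical
  let g : MvPowerSeries σ R := fun e => coeff (e + single a 1) f
  let h : MvPowerSeries σ R := fun e => if e a = 0 then coeff e f else 0
  have hg : ∀ e, coeff e g = coeff (e + single a 1) f := fun _ => rfl
  have hh : ∀ e, coeff e h = if e a = 0 then coeff e f else 0 := fun _ => rfl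
  refine ⟨g, h, ext fun e => ?_, hg, hh⟩
  rw [map_add, X_def, coeff_monomial_mul, one_mul, hh]
  by_cases he : e a = 0
  · rw [if_neg (by simpa [single_le_iff] using he), if_pos he, zero_add]
  · have hle : single a 1 ≤ e := single_le_iff.2 (Nat.one_le_iff_ne_zero.2 he)
    rw [if_pos hle, if_neg he, hg, tsub_add_cancel_of_le hle, add_zero]

theorem mem_span_X_image_mul_weightedOrderIdeal {t : Finset σ} (hw : ∀ a ∈ t, w a ≤ 1)
    (hf : f ∈ weightedOrderIdeal w (n + 1))
    (hft : ∀ e : σ →₀ ℕ, (∀ i ∈ t, e i = 0) → coeff e f = 0) :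
    f ∈ Ideal.span (X '' t) * weightedOrderIdeal w n := by
  classical
  induction t using Finset.induction_on generalizing f with
  | empty =>
    rw [show f = 0 from ext fun e => hft e (by simp)]
    exact zero_mem _
  | insert a t ha ih =>
    obtain ⟨g, h, hfgh, hg, hh⟩ := exists_eq_X_mul_add a f
    have hgn : g ∈ weightedOrderIdeal w n := by
      refine nat_le_weightedOrder w fun e he => ?_
      rw [hg]
      refine coeff_eq_zero_of_lt_weightedOrder w (lt_of_lt_of_le ?_ hf)
      rw [map_add, weight_single, one_smul]
      have := hw a (by simp)
      exact_mod_cast (by omega : weight w e + w a < n + 1)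
    have hhn : h ∈ weightedOrderIdeal w (n + 1) := by
      refine nat_le_weightedOrder w fun e he => ?_
      rw [hh]
      split_ifs
      · exact coeff_eq_zero_of_lt_weightedOrder w (lt_of_lt_of_le (by exact_mod_cast he) hf)
      · rfl
    have hht : ∀ e : σ →₀ ℕ, (∀ i ∈ t, e i = 0) → coeff e h = 0 := by
      intro e he
      rw [hh]
      split_ifs with hea
      · exact hft e (by simpa [hea] using he)
      · rfl
    rw [hfgh]
    exact add_mem (Ideal.mul_mem_mul (Ideal.subset_span ⟨a, by simp, rfl⟩) hgn)
      (Ideal.mul_mono_left (Ideal.span_mono (Set.image_mono (by simp)))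
        (ih (fun b hb => hw b (by simp [hb])) hhn hht))

theorem weightedOrderIdeal_succ_le {s : Set σ} (hs : s.Finite) (n : ℕ) :
    weightedOrderIdeal (s.indicator 1) (n + 1) ≤
      Ideal.span (X '' s) * weightedOrderIdeal (R := R) (s.indicator 1) n := by
  intro f hf
  have := mem_span_X_image_mul_weightedOrderIdeal (t := hs.toFinset)
    (fun a _ => Set.indicator_le_self' (by simp) a) hf fun e he => by
      refine coeff_eq_zero_of_lt_weightedOrder _ (lt_of_lt_of_le ?_ hf)
      have hwe : weight (s.indicator 1) e = 0 := by
        refine Finset.sum_eq_zero fun i _ => ?_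
        by_cases hi : i ∈ s
        · simp [he i (by simpa using hi)]
        · simp [hi]
      rw [hwe]
      exact_mod_cast n.succ_pos
  rwa [hs.coe_toFinset] at this

theorem span_X_image_pow_eq_weightedOrderIdeal {s : Set σ} (hs : s.Finite) (n : ℕ) :
    Ideal.span (X '' s) ^ n = weightedOrderIdeal (R := R) (s.indicator 1) n := by
  refine le_antisymm (pow_le_weightedOrderIdeal
    (span_X_image_le_weightedOrderIdeal_one fun i hi => by simp [hi]) n) ?_
  induction n with
  | zero => simp [weightedOrderIdeal_zero]
  | succ n ih =>
    rw [pow_succ']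
    exact (weightedOrderIdeal_succ_le hs n).trans (Ideal.mul_mono_right ih)

theorem mem_span_range_X_iff_constantCoeff_eq_zero [Finite σ] :
    f ∈ Ideal.span (Set.range X) ↔ constantCoeff f = 0 := by
  rw [← Set.image_univ, ← pow_one (Ideal.span _),
    span_X_image_pow_eq_weightedOrderIdeal Set.finite_univ, Set.indicator_univ,
    mem_weightedOrderIdeal, Nat.cast_one]
  exact one_le_order_iff_constCoeff_eq_zero

end MvPowerSeries

/-- Here `w = X 0`, `x = X 1`, `y = X 2`. -/
theorem nonunit_divisor_mem_of_ord_eq_ordI_general {k : Type*} [Field k]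
    (m I : Ideal (MvPowerSeries (Fin 3) k))
    (hm : m = Ideal.span {(X 0 : MvPowerSeries (Fin 3) k), X 1, X 2})
    (hI : I = Ideal.span {(X 1 : MvPowerSeries (Fin 3) k), X 2})
    (G : MvPowerSeries (Fin 3) k) (d : ℕ)
    (hGm' : G ∉ m ^ (d + 1))
    (hGI : G ∈ I ^ d)
    (θ : MvPowerSeries (Fin 3) k) (hθ : ¬ IsUnit θ) (hdvd : θ ∣ G) :
    θ ∈ I := by
  obtain ⟨ψ, rfl⟩ := hdvd
  set w : Fin 3 → ℕ := ({1, 2} : Set (Fin 3)).indicator 1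
  have hIpow (n : ℕ) : I ^ n = weightedOrderIdeal w n := by
    rw [hI, ← span_X_image_pow_eq_weightedOrderIdeal (Set.toFinite _), Set.image_pair]
  by_contra hθI
  have hθw : θ.weightedOrder w = 0 := by
    rw [← pow_one I, hIpow, mem_weightedOrderIdeal, not_le, Nat.cast_one] at hθI
    exact Order.lt_one_iff.1 hθI
  have hψ : ψ ∈ I ^ d := by
    rw [hIpow, mem_weightedOrderIdeal] at hGI ⊢
    rwa [weightedOrder_mul, hθw, zero_add] at hGI
  have hθm : θ ∈ m := by
    have hrange : Set.range (X : Fin 3 → MvPowerSeries (Fin 3) k) = {X 0, X 1, X 2} := by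
      ext; simp [Fin.exists_fin_succ, eq_comm]
    rw [hm, ← hrange, mem_span_range_X_iff_constantCoeff_eq_zero]
    rwa [isUnit_iff_constantCoeff, isUnit_iff_ne_zero, not_not] at hθ
  have hIm : I ≤ m := by
    rw [hI, hm]
    exact Ideal.span_mono (Set.subset_insert _ _)
  exact hGm' (pow_succ' m d ▸ Ideal.mul_mem_mul hθm (Ideal.pow_right_mono hIm d hψ))

/-- Lemma 3.7 (lem:ordgeom) of the paper.  In `R = k⟦w,x,y⟧` (variables indexed
by `Fin 3` with `w = X 0`, `x = X 1`, `y = X 2`), let `m = (w,x,y)` and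
`I = (x,y)`.  If `G ≠ 0` has the same order `d` with respect to `m` and to `I`
(i.e. `G ∈ mᵈ \ mᵈ⁺¹` and `G ∈ Iᵈ \ Iᵈ⁺¹`), then every nonunit divisor `θ`
of `G` lies in `I`. -/
theorem nonunit_divisor_mem_of_ord_eq_ordI {k : Type*} [Field k]
    (m I : Ideal (MvPowerSeries (Fin 3) k))
    (hm : m = Ideal.span {(X 0 : MvPowerSeries (Fin 3) k), X 1, X 2})
    (hI : I = Ideal.span {(X 1 : MvPowerSeries (Fin 3) k), X 2})
    (G : MvPowerSeries (Fin 3) k) (hG : G ≠ 0) (d : ℕ)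
    (hGm : G ∈ m ^ d) (hGm' : G ∉ m ^ (d + 1))
    (hGI : G ∈ I ^ d) (hGI' : G ∉ I ^ (d + 1))
    (θ : MvPowerSeries (Fin 3) k) (hθ : ¬ IsUnit θ) (hdvd : θ ∣ G) :
    θ ∈ I :=
  nonunit_divisor_mem_of_ord_eq_ordI_general m I hm hI G d hGm' hGI θ hθ hdvd
end

section
/- Let k be a field of characteristic zero and let k⟦v,x,y⟧ denote the ring of formal power series in v, x, y over k. The polynomial z² + (v² + y)·y² ∈ k⟦v,x,y⟧[z] is irreducible over the fraction field of k⟦v,x,y⟧; consequently, the monic cubic f = (z + x)(z² + (w + y)y²) over k⟦w,x,y⟧ does not split into three monic linear factors over k⟦v,x,y⟧ after the coefficient substitution w ↦ v². -/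
instance MvPowerSeries.instIsDomainOfField {K : Type*} [Field K] (σ : Type*) :
    IsDomain (MvPowerSeries σ K) :=
  NoZeroDivisors.to_isDomain _

/-- `φ` is the ring homomorphism `k⟦w,x,y⟧ → k⟦v,x,y⟧` sending `w ↦ vⁿ`,
`x ↦ x`, `y ↦ y`, characterized on coefficients. -/
def IsSubstPow {k : Type*} [CommSemiring k] (n : ℕ)
    (φ : MvPowerSeries (Fin 3) k →+* MvPowerSeries (Fin 3) k) : Prop :=
  ∀ (f : MvPowerSeries (Fin 3) k) (d : Fin 3 →₀ ℕ),
    MvPowerSeries.coeff d (φ f) =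
      if n ∣ d 0 then MvPowerSeries.coeff (Finsupp.update d 0 (d 0 / n)) f
      else 0

/-!
After `w ↦ v²` the quadratic factor of `f` becomes `z² + q` with `q = (v² + y)·y²`. In
`k⟦v,x,y⟧` the total order is additive, and `q` has order `1 + 2 = 3`, which is odd; so
`-q · b²` never equals a square `a²` for `b ≠ 0`. Clearing denominators, `-q` is not a square
in the fraction field, hence `z² + q` is irreducible there. An irreducible quadratic cannot
divide a product of linear polynomials, so the substituted cubic does not split.
-/

namespace IsSubstPow

open MvPowerSeries

variable {k : Type*} [CommSemiring k] {n : ℕ}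
  {φ : MvPowerSeries (Fin 3) k →+* MvPowerSeries (Fin 3) k}

theorem map_monomial (h : IsSubstPow n φ) (hn : 0 < n) (e : Fin 3 →₀ ℕ) (a : k) :
    φ (monomial e a) = monomial (e.update 0 (n * e 0)) a := by
  classical
  ext d
  rw [h, coeff_monomial, coeff_monomial]
  by_cases hd : n ∣ d 0
  · obtain ⟨m, hm⟩ := hd
    rw [if_pos ⟨m, hm⟩, hm, Nat.mul_div_cancel_left m hn]
    refine if_congr ⟨?_, ?_⟩ rfl rfl
    · rintro rfl
      ext j
      by_cases hj : j = 0 <;> simp [Finsupp.update_apply, hj, hm]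
    · rintro rfl
      have he : e 0 = m := Nat.eq_of_mul_eq_mul_left hn (by simpa using hm)
      rw [he, Finsupp.update_idem, ← he, Finsupp.update_self]
  · rw [if_neg hd, if_neg]
    rintro rfl
    exact hd ⟨e 0, by simp⟩

theorem map_X_zero (h : IsSubstPow n φ) (hn : 0 < n) : φ (X 0) = X 0 ^ n := by
  rw [X_pow_eq, X, h.map_monomial hn, Finsupp.single_eq_same, mul_one]
  exact congrArg (monomial · 1) (Finsupp.ext fun j => by
    by_cases hj : j = 0 <;> simp [Finsupp.update_apply, hj])

theorem map_X_of_ne_zero (h : IsSubstPow n φ) (hn : 0 < n) {i : Fin 3} (hi : i ≠ 0) :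
    φ (X i) = X i := by
  rw [X, h.map_monomial hn, Finsupp.single_eq_of_ne' hi, mul_zero]
  exact congrArg (monomial · 1) (Finsupp.ext fun j => by
    by_cases hj : j = 0 <;> simp [Finsupp.update_apply, hj, Finsupp.single_eq_of_ne' hi])

end IsSubstPow

namespace MvPowerSeries

variable {σ R : Type*}

theorem order_X [Semiring R] [Nontrivial R] (i : σ) : (X i : MvPowerSeries σ R).order = 1 := by
  rw [X, order_monomial_of_ne_zero one_ne_zero, Finsupp.degree_single, Nat.cast_one]

theorem order_X_pow_add_X [Semiring R] [Nontrivial R] {m : ℕ} (hm : 2 ≤ m) (i j : σ) :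
    (X i ^ m + X j : MvPowerSeries σ R).order = 1 := by
  have hpow : (X i ^ m : MvPowerSeries σ R).order = m := by
    rw [X_pow_eq, order_monomial_of_ne_zero one_ne_zero, Finsupp.degree_single]
  rw [order_add_of_order_ne (by rw [hpow, order_X]; exact_mod_cast (by omega : m ≠ 1)), hpow,
    order_X]
  exact min_eq_right (by exact_mod_cast (by omega : 1 ≤ m))

theorem mul_self_ne_mul_mul_self_of_odd_order [Semiring R] [NoZeroDivisors R]
    {q a b : MvPowerSeries σ R} {n : ℕ} (hq : q.order = n) (hn : Odd n) (hb : b ≠ 0) :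
    a * a ≠ q * (b * b) := by
  intro h
  obtain ⟨β, hβ⟩ := ENat.ne_top_iff_exists.mp (mt order_eq_top_iff.mp hb)
  have horder := congrArg order h
  rw [order_mul, order_mul, order_mul, hq, ← hβ] at horder
  induction ha : a.order using ENat.recTopCoe with
  | top =>
    rw [ha, top_add] at horder
    exact ENat.top_ne_natCast (n + (β + β)) (by exact_mod_cast horder)
  | coe α =>
    rw [ha] at horder
    norm_cast at horder
    obtain ⟨r, rfl⟩ := hn
    omega

end MvPowerSeries

theorem IsFractionRing.exists_mul_self_eq_mul_mul_self {A K : Type*} [CommRing A] [CommRing K]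
    [Algebra A K] [IsFractionRing A K] {q : A} {r : K} (h : r * r = algebraMap A K q) :
    ∃ a, ∃ b ∈ nonZeroDivisors A, a * a = q * (b * b) := by
  obtain ⟨⟨a, b, hb⟩, hab⟩ := IsLocalization.surj (nonZeroDivisors A) r
  refine ⟨a, b, hb, IsFractionRing.injective A K ?_⟩
  simp only [map_mul, ← hab, ← h]
  ring

namespace Polynomial

theorem irreducible_X_sq_add_C_algebraMap {A K : Type*} [CommRing A] [Field K]
    [Algebra A K] [IsFractionRing A K] {q : A}
    (hq : ∀ a, ∀ b ∈ nonZeroDivisors A, a * a ≠ -q * (b * b)) :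
    Irreducible (X ^ 2 + C (algebraMap A K q)) := by
  rw [← sub_neg_eq_add, ← map_neg C, ← map_neg]
  refine X_pow_sub_C_irreducible_of_prime Nat.prime_two fun r hr => ?_
  obtain ⟨a, b, hb, hab⟩ := IsFractionRing.exists_mul_self_eq_mul_mul_self (A := A) (K := K)
    (by rw [← sq, hr])
  exact hq a b hb hab

theorem not_splits_of_irreducible_dvd {K : Type*} [Field K] {f g : K[X]} (hg : Irreducible g)
    (hdeg : g.natDegree ≠ 1) (hf : f ≠ 0) (hgf : g ∣ f) : ¬ f.Splits :=
  fun hs => hdeg ((hs.of_dvd hf hgf).natDegree_eq_one_of_irreducible hg)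

end Polynomial

open MvPowerSeries in
/-- Variables: `w = X 0` (resp. `v = X 0`), `x = X 1`, `y = X 2`. -/
theorem remark_example_not_split_after_v2_general {k : Type*} [Field k]
    (φ₂ : MvPowerSeries (Fin 3) k →+* MvPowerSeries (Fin 3) k)
    (h2 : IsSubstPow 2 φ₂) :
    Irreducible (Polynomial.X ^ 2 + Polynomial.C
        (algebraMap (MvPowerSeries (Fin 3) k)
          (FractionRing (MvPowerSeries (Fin 3) k))
          (((MvPowerSeries.X 0) ^ 2 + MvPowerSeries.X 2) * (MvPowerSeries.X 2) ^ 2))) ∧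
      ¬ ∃ a b c : MvPowerSeries (Fin 3) k,
        Polynomial.map φ₂
            ((Polynomial.X + Polynomial.C (MvPowerSeries.X 1)) *
              (Polynomial.X ^ 2 + Polynomial.C
                ((MvPowerSeries.X 0 + MvPowerSeries.X 2) * (MvPowerSeries.X 2) ^ 2))) =
          (Polynomial.X + Polynomial.C a) * (Polynomial.X + Polynomial.C b) *
            (Polynomial.X + Polynomial.C c) := by
  set q : MvPowerSeries (Fin 3) k := ((X 0) ^ 2 + X 2) * (X 2) ^ 2
  set F := algebraMap (MvPowerSeries (Fin 3) k) (FractionRing (MvPowerSeries (Fin 3) k))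
  have hq : (-q).order = 3 := by
    rw [order_neg, order_mul, order_X_pow_add_X le_rfl, sq, order_mul, order_X]
    rfl
  have hirr : Irreducible (Polynomial.X ^ 2 + Polynomial.C (F q)) :=
    Polynomial.irreducible_X_sq_add_C_algebraMap fun a b hb =>
      mul_self_ne_mul_mul_self_of_odd_order hq (by decide) (nonZeroDivisors.ne_zero hb)
  refine ⟨hirr, ?_⟩
  rintro ⟨a, b, c, hsplit⟩
  have hmap : Polynomial.map φ₂ ((Polynomial.X + Polynomial.C (X 1)) *
      (Polynomial.X ^ 2 + Polynomial.C ((X 0 + X 2) * (X 2) ^ 2))) =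
      (Polynomial.X + Polynomial.C (X 1)) * (Polynomial.X ^ 2 + Polynomial.C q) := by
    simp only [Polynomial.map_mul, Polynomial.map_add, Polynomial.map_pow, Polynomial.map_X,
      Polynomial.map_C, map_mul, map_add, map_pow, h2.map_X_zero two_pos,
      h2.map_X_of_ne_zero two_pos (by decide : (1 : Fin 3) ≠ 0),
      h2.map_X_of_ne_zero two_pos (by decide : (2 : Fin 3) ≠ 0), q]
  have hsplits : ((Polynomial.X + Polynomial.C (F (X 1))) *
      (Polynomial.X ^ 2 + Polynomial.C (F q))).Splits := by
    have := (((Polynomial.Splits.X_add_C a).mul (Polynomial.Splits.X_add_C b)).mul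
      (Polynomial.Splits.X_add_C c)).map F
    rw [← hsplit, hmap] at this
    simpa only [Polynomial.map_mul, Polynomial.map_add, Polynomial.map_pow, Polynomial.map_X,
      Polynomial.map_C] using this
  refine Polynomial.not_splits_of_irreducible_dvd hirr ?_ ?_ (dvd_mul_left _ _) hsplits
  · rw [Polynomial.natDegree_X_pow_add_C]; decide
  · exact ((Polynomial.monic_X_add_C _).mul (Polynomial.monic_X_pow_add_C _ two_ne_zero)).ne_zero

/-- The example of Remark 1.11(2) of the paper: `z² + (v² + y)y²` is irreducible
over `Frac k⟦v,x,y⟧`, and consequently the cubic `f = (z + x)(z² + (w + y)y²)`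
over `k⟦w,x,y⟧` does not split into three monic linear factors after the
substitution `w ↦ v²`.  Variables: `w = X 0` (resp. `v = X 0`), `x = X 1`,
`y = X 2`. -/
theorem remark_example_not_split_after_v2 {k : Type*} [Field k] [CharZero k]
    (φ₂ : MvPowerSeries (Fin 3) k →+* MvPowerSeries (Fin 3) k)
    (h2 : IsSubstPow 2 φ₂) :
    Irreducible (Polynomial.X ^ 2 + Polynomial.C
        (algebraMap (MvPowerSeries (Fin 3) k)
          (FractionRing (MvPowerSeries (Fin 3) k))
          (((MvPowerSeries.X 0) ^ 2 + MvPowerSeries.X 2) * (MvPowerSeries.X 2) ^ 2))) ∧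
      ¬ ∃ a b c : MvPowerSeries (Fin 3) k,
        Polynomial.map φ₂
            ((Polynomial.X + Polynomial.C (MvPowerSeries.X 1)) *
              (Polynomial.X ^ 2 + Polynomial.C
                ((MvPowerSeries.X 0 + MvPowerSeries.X 2) * (MvPowerSeries.X 2) ^ 2))) =
          (Polynomial.X + Polynomial.C a) * (Polynomial.X + Polynomial.C b) *
            (Polynomial.X + Polynomial.C c) :=
  remark_example_not_split_after_v2_general φ₂ h2
end
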